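/- arXiv:math/0412363 — 3 statements merged into one kernel-verified Lean document; each statement's English description precedes it below -/
import Mathlib

section
/- Let F be a path-connected and simply connected topological space, let B be a path-connected paracompact topological space, and let proj : Z → B be a fiber bundle with fiber F. Then for every z ∈ Z, the induced homomorphism proj_* : π₁(Z, z) → π₁(B, proj z) on fundamental groups is an isomorphism. -/
/-!
Over a trivializing open set, a lift of a map given on a retract `J` of a set `C` extends to `C`:
keep the fibre coordinate of the lift at the retracted point. Cut `[0,1]²` into a grid whose cells
are each mapped into one trivializing set (Lebesgue number) and fill the cells column by column,
bottom to top: every new cell meets the part already lifted in its left and bottom edges, which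
are a retract of the cell. Hence a map `[0,1]² → B` lifts, with the lift prescribed on the left
and bottom edges of the square.

Surjectivity: lift a loop at `proj z` to a path starting at `z`; it ends in the fibre over
`proj z`, where it is closed up since the fibre is path-connected. Injectivity: lift a
null-homotopy of `proj ∘ γ` with `γ` on the left edge; the other three edges go into the fibre
over `proj z`, so `γ` is homotopic to a loop in that fibre, which is simply connected.
-/

open CategoryTheory FundamentalGroupoid

universe u

/-- The group homomorphism `π₁(X, x) → π₁(Y, f x)` induced on fundamental groups by a
pointed continuous map, obtained from the fundamental groupoid functor. -/
noncomputable def piOneMap {X Y : Type u} [TopologicalSpace X] [TopologicalSpace Y]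
    (f : C(X, Y)) (x : X) :
    FundamentalGroup X x →* FundamentalGroup Y (f x) :=
  CategoryTheory.Functor.mapEnd ⟨x⟩ (πₘ (TopCat.ofHom f))

open Set
open scoped unitInterval

section Rectangles

def cornerEdges (a b c d : ℝ) : Set (ℝ × ℝ) :=
  {x ∈ Icc a b ×ˢ Icc c d | x.1 ≤ a ∨ x.2 ≤ c}

theorem isClosed_cornerEdges (a b c d : ℝ) : IsClosed (cornerEdges a b c d) :=
  (isClosed_Icc.prod isClosed_Icc).inter
    ((isClosed_le continuous_fst continuous_const).union
      (isClosed_le continuous_snd continuous_const))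

/-- Slides a point of `Icc a b ×ˢ Icc c d` along `(-1, -1)` onto `cornerEdges a b c d`. -/
def cornerRetraction (a c : ℝ) (x : ℝ × ℝ) : ℝ × ℝ :=
  (x.1 - min (x.1 - a) (x.2 - c), x.2 - min (x.1 - a) (x.2 - c))

theorem continuous_cornerRetraction (a c : ℝ) : Continuous (cornerRetraction a c) := by
  unfold cornerRetraction
  fun_prop

theorem mapsTo_cornerRetraction (a b c d : ℝ) :
    MapsTo (cornerRetraction a c) (Icc a b ×ˢ Icc c d) (cornerEdges a b c d) := by
  rintro ⟨x, y⟩ ⟨⟨hxa, hxb⟩, hyc, hyd⟩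
  simp only [cornerEdges, cornerRetraction, mem_ofPred_eq, mem_prod, mem_Icc]
  rcases le_total (x - a) (y - c) with h | h
  · simp only [min_eq_left h]
    refine ⟨⟨⟨?_, ?_⟩, ?_, ?_⟩, ?_⟩ <;> first | left; linarith | linarith
  · simp only [min_eq_right h]
    refine ⟨⟨⟨?_, ?_⟩, ?_, ?_⟩, ?_⟩ <;> first | right; linarith | linarith

theorem cornerRetraction_eq_self {a b c d : ℝ} {x : ℝ × ℝ} (hx : x ∈ cornerEdges a b c d) :
    cornerRetraction a c x = x := by
  obtain ⟨⟨⟨hxa, -⟩, hyc, -⟩, h | h⟩ := hx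
  · have : min (x.1 - a) (x.2 - c) = 0 := by rw [min_eq_left] <;> linarith
    simp [cornerRetraction, this]
  · have : min (x.1 - a) (x.2 - c) = 0 := by rw [min_eq_right] <;> linarith
    simp [cornerRetraction, this]

theorem exists_grid_subset_of_isOpen {ι : Type*} {U : ι → Set (ℝ × ℝ)} (hU : ∀ k, IsOpen (U k))
    (hcover : Icc 0 1 ×ˢ Icc 0 1 ⊆ ⋃ k, U k) :
    ∃ N : ℕ, 0 < N ∧ ∀ i < N, ∀ j < N, ∃ k,
      Icc ((i : ℝ) / N) ((i + 1 : ℕ) / N) ×ˢ Icc ((j : ℝ) / N) ((j + 1 : ℕ) / N) ⊆ U k := by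
  obtain ⟨δ, hδ, hball⟩ :=
    lebesgue_number_lemma_of_metric (isCompact_Icc.prod isCompact_Icc) hU hcover
  obtain ⟨n, hn⟩ := exists_nat_one_div_lt hδ
  have hN : (0 : ℝ) < (n + 1 : ℕ) := by positivity
  refine ⟨n + 1, n.succ_pos, fun i hi j hj => ?_⟩
  have hmem : ∀ k < n + 1, ((k : ℝ) / (n + 1 : ℕ)) ∈ Icc (0 : ℝ) 1 := fun k hk =>
    ⟨by positivity, (div_le_one hN).2 (by exact_mod_cast hk.le)⟩
  obtain ⟨k, hk⟩ := hball _ (mk_mem_prod (hmem i hi) (hmem j hj))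
  refine ⟨k, fun y hy => hk ?_⟩
  have hstep : ∀ m : ℕ, ((m + 1 : ℕ) : ℝ) / (n + 1 : ℕ) - m / (n + 1 : ℕ) < δ := fun m => by
    push_cast at hn ⊢
    rw [← sub_div]
    simpa using hn
  rw [Metric.mem_ball, Prod.dist_eq, max_lt_iff, Real.dist_eq, Real.dist_eq, abs_sub_lt_iff,
    abs_sub_lt_iff]
  obtain ⟨⟨h1, h2⟩, h3, h4⟩ := hy
  have := hstep i
  have := hstep j
  refine ⟨⟨?_, ?_⟩, ?_, ?_⟩ <;> linarith

end Rectangles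

section Lifting

variable {B Z X : Type*} [TopologicalSpace Z] [TopologicalSpace X] {proj : Z → B}

def IsLiftOn (proj : Z → B) (K : X → B) (L : X → Z) (s : Set X) : Prop :=
  ContinuousOn L s ∧ ∀ x ∈ s, proj (L x) = K x

theorem IsLiftOn.mono {K : X → B} {L : X → Z} {s t : Set X} (h : IsLiftOn proj K L s)
    (hts : t ⊆ s) : IsLiftOn proj K L t :=
  ⟨h.1.mono hts, fun x hx => h.2 x (hts hx)⟩

variable {F : Type*} [TopologicalSpace F] [TopologicalSpace B]

theorem Bundle.Trivialization.exists_isLiftOn_union (e : Trivialization F proj) {A C : Set X}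
    (hA : IsClosed A) (hC : IsClosed C) {r : X → X} (hr : ContinuousOn r C)
    (hrC : MapsTo r C (A ∩ C)) (hrA : ∀ x ∈ A ∩ C, r x = x)
    {K : X → B} (hK : ContinuousOn K C) (hKe : MapsTo K C e.baseSet)
    {L : X → Z} (hL : IsLiftOn proj K L A) :
    ∃ L' : X → Z, IsLiftOn proj K L' (A ∪ C) ∧ EqOn L' L A := by
  classical
  have hsource : ∀ x ∈ A ∩ C, L x ∈ e.source := fun x hx =>
    e.mem_source.2 (hL.2 x hx.1 ▸ hKe hx.2)
  set M : X → Z := fun x => e.toOpenPartialHomeomorph.symm (K x, (e (L (r x))).2)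
  have hML : EqOn M L (A ∩ C) := fun x hx => by
    simp only [M, hrA x hx, ← hL.2 x hx.1, e.symm_apply_mk_proj (hsource x hx)]
  have hM : ContinuousOn M C := by
    have hLr : ContinuousOn (fun x => e (L (r x))) C :=
      e.continuousOn_toFun.comp (hL.1.comp hr fun x hx => (hrC hx).1)
        fun x hx => hsource _ (hrC hx)
    refine e.toOpenPartialHomeomorph.continuousOn_symm.comp (hK.prodMk hLr.snd) fun x hx => ?_
    rw [e.target_eq]
    exact ⟨hKe hx, mem_univ _⟩
  refine ⟨A.piecewise L M, ⟨?_, fun x hx => ?_⟩, piecewise_eqOn _ _ _⟩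
  · refine ContinuousOn.union_of_isClosed (hL.1.congr (piecewise_eqOn _ _ _))
      (hM.congr fun x hx => ?_) hA hC
    by_cases hxA : x ∈ A
    · rw [piecewise_eq_of_mem _ _ _ hxA, hML ⟨hxA, hx⟩]
    · rw [piecewise_eq_of_notMem _ _ _ hxA]
  · by_cases hxA : x ∈ A
    · rw [piecewise_eq_of_mem _ _ _ hxA, hL.2 x hxA]
    · rw [piecewise_eq_of_notMem _ _ _ hxA]
      exact e.proj_symm_apply' (hKe (hx.resolve_left hxA))

theorem exists_isLiftOn_union_column {K : ℝ × ℝ → B} (hK : Continuous K) {a b : ℝ}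
    {N : ℕ} {v : ℕ → ℝ} (hv : Monotone v) (hv0 : v 0 = 0) (hvN : v N = 1)
    (hcell : ∀ j < N, ∃ e : Bundle.Trivialization F proj,
      MapsTo K (Icc a b ×ˢ Icc (v j) (v (j + 1))) e.baseSet)
    {A : Set (ℝ × ℝ)} (hA : IsClosed A) (hAcol : A ∩ Icc a b ×ˢ Icc 0 1 ⊆ cornerEdges a b 0 1)
    (hedges : cornerEdges a b 0 1 ⊆ A) {L : ℝ × ℝ → Z} (hL : IsLiftOn proj K L A) :
    ∃ L', IsLiftOn proj K L' (A ∪ Icc a b ×ˢ Icc 0 1) ∧ EqOn L' L A := by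
  have hv_nonneg : ∀ j, 0 ≤ v j := fun j => hv0 ▸ hv j.zero_le
  suffices ∀ j ≤ N, ∃ L', IsLiftOn proj K L' (A ∪ Icc a b ×ˢ Icc 0 (v j)) ∧ EqOn L' L A by
    simpa only [hvN] using this N le_rfl
  intro j
  induction j with
  | zero =>
    refine fun _ => ⟨L, hL.mono (union_subset subset_rfl fun x hx => hedges ?_), fun _ _ => rfl⟩
    obtain ⟨hx1, hx2⟩ := hx
    rw [hv0] at hx2
    exact ⟨⟨hx1, hx2.1, hx2.2.trans zero_le_one⟩, Or.inr hx2.2⟩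
  | succ j ih =>
    intro hj
    obtain ⟨L₁, hL₁, hL₁L⟩ := ih (Nat.le_of_succ_le hj)
    obtain ⟨e, he⟩ := hcell j hj
    have hvj : v (j + 1) ≤ 1 := hvN ▸ hv hj
    have hsub : cornerEdges a b (v j) (v (j + 1)) ⊆
        (A ∪ Icc a b ×ˢ Icc 0 (v j)) ∩ Icc a b ×ˢ Icc (v j) (v (j + 1)) := by
      rintro x ⟨⟨hx1, hx2⟩, h | h⟩
      · exact ⟨Or.inl (hedges ⟨⟨hx1, (hv_nonneg j).trans hx2.1, hx2.2.trans hvj⟩, Or.inl h⟩),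
          hx1, hx2⟩
      · exact ⟨Or.inr ⟨hx1, (hv_nonneg j).trans hx2.1, h⟩, hx1, hx2⟩
    have hsup : (A ∪ Icc a b ×ˢ Icc 0 (v j)) ∩ Icc a b ×ˢ Icc (v j) (v (j + 1)) ⊆
        cornerEdges a b (v j) (v (j + 1)) := by
      rintro x ⟨hx | ⟨-, hx2⟩, hx1, hx2'⟩
      · obtain ⟨-, h | h⟩ := hAcol ⟨hx, hx1, (hv_nonneg j).trans hx2'.1, hx2'.2.trans hvj⟩
        · exact ⟨⟨hx1, hx2'⟩, Or.inl h⟩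
        · exact ⟨⟨hx1, hx2'⟩, Or.inr (h.trans (hv_nonneg j))⟩
      · exact ⟨⟨hx1, hx2'⟩, Or.inr hx2.2⟩
    obtain ⟨L₂, hL₂, hL₂L₁⟩ := e.exists_isLiftOn_union
      (hA.union (isClosed_Icc.prod isClosed_Icc)) (isClosed_Icc.prod isClosed_Icc)
      (continuous_cornerRetraction a (v j)).continuousOn
      ((mapsTo_cornerRetraction _ _ _ _).mono_right hsub)
      (fun x hx => cornerRetraction_eq_self (hsup hx)) hK.continuousOn he hL₁
    refine ⟨L₂, hL₂.mono ?_, fun x hx => (hL₂L₁ (Or.inl hx)).trans (hL₁L hx)⟩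
    rintro x (hx | ⟨hx1, hx2⟩)
    · exact Or.inl (Or.inl hx)
    · rcases le_total x.2 (v j) with h | h
      · exact Or.inl (Or.inr ⟨hx1, hx2.1, h⟩)
      · exact Or.inr ⟨hx1, h, hx2.2⟩

theorem exists_isLiftOn_unitSquare
    (htriv : ∀ b : B, ∃ e : Bundle.Trivialization F proj, b ∈ e.baseSet)
    {K : ℝ × ℝ → B} (hK : Continuous K) {Λ : ℝ × ℝ → Z}
    (hΛ : IsLiftOn proj K Λ (cornerEdges 0 1 0 1)) :
    ∃ L, IsLiftOn proj K L (Icc 0 1 ×ˢ Icc 0 1) ∧ EqOn L Λ (cornerEdges 0 1 0 1) := by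
  obtain ⟨N, hN, hgrid⟩ := exists_grid_subset_of_isOpen
    (fun e : Bundle.Trivialization F proj => e.open_baseSet.preimage hK)
    fun x _ => mem_iUnion.2 (htriv (K x))
  set u : ℕ → ℝ := fun k => k / N
  have hu : Monotone u := fun i j hij => by simp only [u]; gcongr
  have hu0 : u 0 = 0 := by simp [u]
  have huN : u N = 1 := div_self (by positivity)
  have hu_nonneg : ∀ i, 0 ≤ u i := fun i => hu0 ▸ hu i.zero_le
  suffices ∀ i ≤ N, ∃ L, IsLiftOn proj K L (cornerEdges 0 1 0 1 ∪ Icc 0 (u i) ×ˢ Icc 0 1) ∧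
      EqOn L Λ (cornerEdges 0 1 0 1) by
    obtain ⟨L, hL, hLΛ⟩ := this N le_rfl
    exact ⟨L, hL.mono (huN ▸ subset_union_right), hLΛ⟩
  intro i
  induction i with
  | zero =>
    refine fun _ => ⟨Λ, hΛ.mono (union_subset subset_rfl ?_), fun _ _ => rfl⟩
    rintro x ⟨hx1, hx2⟩
    rw [hu0] at hx1
    exact ⟨⟨⟨hx1.1, hx1.2.trans zero_le_one⟩, hx2⟩, Or.inl hx1.2⟩
  | succ i ih =>
    intro hi
    obtain ⟨L₁, hL₁, hL₁Λ⟩ := ih (Nat.le_of_succ_le hi)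
    have hui : u (i + 1) ≤ 1 := huN ▸ hu hi
    obtain ⟨L₂, hL₂, hL₂L₁⟩ := exists_isLiftOn_union_column hK hu hu0 huN (hgrid i hi)
      ((isClosed_cornerEdges 0 1 0 1).union (isClosed_Icc.prod isClosed_Icc))
      (by
        rintro x ⟨⟨-, h | h⟩ | ⟨⟨-, h⟩, -⟩, hx1, hx2⟩
        · exact ⟨⟨hx1, hx2⟩, Or.inl (h.trans (hu_nonneg i))⟩
        · exact ⟨⟨hx1, hx2⟩, Or.inr h⟩
        · exact ⟨⟨hx1, hx2⟩, Or.inl h⟩)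
      (by
        rintro x ⟨⟨hx1, hx2⟩, h | h⟩
        · exact Or.inr ⟨⟨(hu_nonneg i).trans hx1.1, h⟩, hx2⟩
        · exact Or.inl ⟨⟨⟨(hu_nonneg i).trans hx1.1, hx1.2.trans hui⟩, hx2⟩, Or.inr h⟩)
      hL₁
    refine ⟨L₂, hL₂.mono ?_, fun x hx => (hL₂L₁ (Or.inl hx)).trans (hL₁Λ hx)⟩
    rintro x (hx | ⟨hx1, hx2⟩)
    · exact Or.inl (Or.inl hx)
    · rcases le_total x.1 (u i) with h | h
      · exact Or.inl (Or.inr ⟨⟨hx1.1, h⟩, hx2⟩)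
      · exact Or.inr ⟨⟨h, hx1.2⟩, hx2⟩

theorem exists_lift_unitSquare
    (htriv : ∀ b : B, ∃ e : Bundle.Trivialization F proj, b ∈ e.baseSet)
    (K : C(I × I, B)) (Λ : C(I × I, Z)) (hΛ : ∀ x : I × I, x.1 = 0 ∨ x.2 = 0 → proj (Λ x) = K x) :
    ∃ L : C(I × I, Z), (∀ x, proj (L x) = K x) ∧ ∀ x : I × I, x.1 = 0 ∨ x.2 = 0 → L x = Λ x := by
  set p : ℝ × ℝ → I × I := Prod.map (projIcc 0 1 zero_le_one) (projIcc 0 1 zero_le_one)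
  have hp : Continuous p := continuous_projIcc.prodMap continuous_projIcc
  have hp_coe : ∀ x : I × I, p (x.1, x.2) = x := fun x =>
    Prod.ext (projIcc_val zero_le_one _) (projIcc_val zero_le_one _)
  have hpJ : ∀ y ∈ cornerEdges 0 1 0 1, (p y).1 = 0 ∨ (p y).2 = 0 := by
    rintro y ⟨-, h | h⟩
    · exact Or.inl (projIcc_of_le_left zero_le_one h)
    · exact Or.inr (projIcc_of_le_left zero_le_one h)
  have hJ : ∀ x : I × I, x.1 = 0 ∨ x.2 = 0 → ((x.1 : ℝ), (x.2 : ℝ)) ∈ cornerEdges 0 1 0 1 := by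
    intro x h
    refine ⟨⟨x.1.2, x.2.2⟩, h.imp (fun h => ?_) (fun h => ?_)⟩ <;> simp [h]
  obtain ⟨L, hL, hLΛ⟩ := exists_isLiftOn_unitSquare htriv (K.continuous.comp hp)
    (Λ := Λ ∘ p) ⟨(Λ.continuous.comp hp).continuousOn, fun y hy => hΛ _ (hpJ y hy)⟩
  refine ⟨⟨fun x => L (x.1, x.2), hL.1.comp_continuous (by fun_prop) fun x =>
    mk_mem_prod x.1.2 x.2.2⟩, fun x => ?_, fun x hx => ?_⟩
  · simpa [hp_coe] using hL.2 _ (mk_mem_prod x.1.2 x.2.2)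
  · simpa [hp_coe] using hLΛ (hJ x hx)

theorem isSimplyConnected_preimage_singleton [SimplyConnectedSpace F]
    (htriv : ∀ b : B, ∃ e : Bundle.Trivialization F proj, b ∈ e.baseSet) (b : B) :
    IsSimplyConnected (proj ⁻¹' {b}) := by
  obtain ⟨e, hb⟩ := htriv b
  exact (e.preimageSingletonHomeomorph hb).toHomotopyEquiv.simplyConnectedSpace

theorem Path.homotopic_refl_of_forall_proj_eq [SimplyConnectedSpace F]
    (htriv : ∀ b : B, ∃ e : Bundle.Trivialization F proj, b ∈ e.baseSet) {z : Z} (γ : Path z z)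
    (hγ : ∀ t, proj (γ t) = proj z) : γ.Homotopic (Path.refl z) := by
  obtain ⟨G, -⟩ := (isSimplyConnected_iff_exists_homotopy_refl_forall_mem.1
    (isSimplyConnected_preimage_singleton htriv (proj z))).2 z γ hγ
  exact ⟨G⟩

theorem exists_path_lift (htriv : ∀ b : B, ∃ e : Bundle.Trivialization F proj, b ∈ e.baseSet)
    {b b' : B} (β : Path b b') {z : Z} (hz : proj z = b) :
    ∃ z' : Z, ∃ Γ : Path z z', ∀ t, proj (Γ t) = β t := by
  obtain ⟨L, hL, hLz⟩ := exists_lift_unitSquare htriv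
    (β.toContinuousMap.comp ⟨fun x : I × I => x.1 * x.2, by fun_prop⟩) (ContinuousMap.const _ z)
    (by rintro ⟨s, t⟩ (rfl | rfl) <;> simp [hz])
  refine ⟨L (1, 1), ⟨⟨fun t => L (1, t), by fun_prop⟩, hLz (1, 0) (Or.inr rfl), rfl⟩, fun t => ?_⟩
  show proj (L (1, t)) = β t
  simpa using hL (1, t)

theorem isPathConnected_preimage_singleton [PathConnectedSpace F]
    (htriv : ∀ b : B, ∃ e : Bundle.Trivialization F proj, b ∈ e.baseSet) (b : B) :
    IsPathConnected (proj ⁻¹' {b}) := by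
  obtain ⟨e, hb⟩ := htriv b
  have := (e.preimageSingletonHomeomorph hb).symm.surjective.pathConnectedSpace
    (e.preimageSingletonHomeomorph hb).symm.continuous
  exact isPathConnected_iff_pathConnectedSpace.2 this

theorem Path.homotopic_refl_of_map_homotopic_refl [SimplyConnectedSpace F]
    (htriv : ∀ b : B, ∃ e : Bundle.Trivialization F proj, b ∈ e.baseSet) (hproj : Continuous proj)
    {z : Z} {γ : Path z z} (h : (γ.map hproj).Homotopic (Path.refl (proj z))) :
    γ.Homotopic (Path.refl z) := by
  obtain ⟨H⟩ := h
  obtain ⟨L, hL, hLγ⟩ := exists_lift_unitSquare htriv H.toContinuousMap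
    (γ.toContinuousMap.comp ContinuousMap.snd) (by rintro ⟨s, t⟩ (rfl | rfl) <;> simp)
  have h00 : L (0, 0) = z := by simpa using hLγ (0, 0) (Or.inl rfl)
  have h01 : L (0, 1) = z := by simpa using hLγ (0, 1) (Or.inl rfl)
  let left : Path ((0, 0) : I × I) (0, 1) := (Path.refl 0).prod Path.id
  let around : Path ((0, 0) : I × I) (0, 1) :=
    ((Path.id.prod (Path.refl 0)).trans ((Path.refl 1).prod Path.id)).trans
      (Path.id.prod (Path.refl 1)).symm
  have hγ : γ = (left.map L.continuous).cast h00.symm h01.symm := by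
    ext t
    simpa [left] using (hLγ (0, t) (Or.inl rfl)).symm
  have haround : range around ⊆ {x | x.1 = 1 ∨ x.2 = 0 ∨ x.2 = 1} := by
    simp only [around, Path.trans_range, Path.symm_range, union_subset_iff, range_subset_iff]
    simp
  have hedges : ∀ x : I × I, x.1 = 1 ∨ x.2 = 0 ∨ x.2 = 1 → H x = proj z := by
    rintro ⟨s, t⟩ (rfl | rfl | rfl) <;> simp
  have : ContractibleSpace I :=
    (convex_Icc (0 : ℝ) 1).contractibleSpace (nonempty_Icc.2 zero_le_one)
  rw [hγ]
  exact (((SimplyConnectedSpace.paths_homotopic left around).map L).pathCast _ _).trans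
    (Path.homotopic_refl_of_forall_proj_eq htriv _ fun t =>
      (hL _).trans (hedges _ (haround (mem_range_self t))))

theorem Path.exists_loop_map_eq_trans_refl [PathConnectedSpace F]
    (htriv : ∀ b : B, ∃ e : Bundle.Trivialization F proj, b ∈ e.baseSet) (hproj : Continuous proj)
    {z : Z} (β : Path (proj z) (proj z)) :
    ∃ γ : Path z z, γ.map hproj = β.trans (Path.refl (proj z)) := by
  obtain ⟨z', Γ, hΓ⟩ := exists_path_lift htriv β rfl
  have hz' : proj z' = proj z := by simpa using hΓ 1
  obtain ⟨δ, hδ⟩ := isPathConnected_preimage_singleton htriv (proj z) |>.joinedIn z' hz' z rfl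
  refine ⟨Γ.trans δ, ?_⟩
  ext t
  simp only [Path.map_coe, Function.comp_apply, Path.trans_apply, Path.refl_apply]
  split_ifs
  · exact hΓ _
  · exact hδ _

end Lifting

theorem piOneMap_mk {X Y : Type u} [TopologicalSpace X] [TopologicalSpace Y] (f : C(X, Y)) {x : X}
    (γ : Path x x) :
    piOneMap f x (Path.Homotopic.Quotient.mk γ) = Path.Homotopic.Quotient.mk (γ.map f.continuous) :=
  rfl

theorem fiberBundle_simplyConnected_fiber_pi1_iso_general
    {F B Z : Type u} [TopologicalSpace F] [TopologicalSpace B] [TopologicalSpace Z]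
    [SimplyConnectedSpace F]
    (proj : Z → B) (hproj : Continuous proj)
    (htriv : ∀ b : B, ∃ e : Bundle.Trivialization F proj, b ∈ e.baseSet) (z : Z) :
    Function.Bijective (piOneMap ⟨proj, hproj⟩ z) := by
  refine ⟨(injective_iff_map_eq_one _).2 fun g => ?_, fun g => ?_⟩
  · induction g using Path.Homotopic.Quotient.ind with | mk γ =>
    rw [piOneMap_mk]
    intro h
    exact Path.Homotopic.Quotient.eq.2
      (Path.homotopic_refl_of_map_homotopic_refl htriv hproj (Path.Homotopic.Quotient.eq.1 h))
  · induction g using Path.Homotopic.Quotient.ind with | mk β =>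
    obtain ⟨γ, hγ⟩ := Path.exists_loop_map_eq_trans_refl htriv hproj β
    refine ⟨Path.Homotopic.Quotient.mk γ, ?_⟩
    rw [piOneMap_mk, Path.Homotopic.Quotient.eq, hγ]
    exact Path.Homotopic.trans_refl β

/-- If `proj : Z → B` is a fiber bundle whose fiber `F` is path-connected and
simply connected, and whose base `B` is path-connected and paracompact, then for every
`z : Z` the induced map `π₁(Z, z) → π₁(B, proj z)` is an isomorphism. -/
theorem fiberBundle_simplyConnected_fiber_pi1_iso
    {F B Z : Type u} [TopologicalSpace F] [TopologicalSpace B] [TopologicalSpace Z]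
    [PathConnectedSpace F] [SimplyConnectedSpace F]
    [PathConnectedSpace B] [ParacompactSpace B]
    (proj : Z → B) (hproj : Continuous proj) (hsurj : Function.Surjective proj)
    (htriv : ∀ b : B, ∃ e : Bundle.Trivialization F proj, b ∈ e.baseSet) (z : Z) :
    Function.Bijective (piOneMap ⟨proj, hproj⟩ z) :=
  fiberBundle_simplyConnected_fiber_pi1_iso_general proj hproj htriv z
end

section
/- Let M be a compact Hausdorff topological manifold (a compact Hausdorff topological space locally homeomorphic to ℝⁿ for some fixed n). Then for every x ∈ M, the fundamental group π₁(M, x) is countable. -/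
/-!
A compact metric space that is strongly locally contractible (as every topological manifold is,
its charts being modelled on balls) has a Lebesgue number `δ` such that any two paths with common
endpoints inside a `δ`-ball are homotopic, and an `ε` such that `ε`-close points are joined by
paths inside small balls. Subdividing the unit interval, two paths that stay `ε`-close are then
homotopic square by square. Hence every homotopy class of loops is open in the separable space of
loops, and there are only countably many of them.
-/

open Set Metric Topology
open scoped unitInterval

section RelSimplyConnected

variable {X : Type*} [TopologicalSpace X]

/-- Paths in `U` with common endpoints are homotopic in the ambient space (not necessarily
within `U`). -/
def IsRelSimplyConnected (U : Set X) : Prop :=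
  ∀ ⦃a b : X⦄ (p q : Path a b), range p ⊆ U → range q ⊆ U → p.Homotopic q

theorem IsRelSimplyConnected.mono {U V : Set X} (hV : IsRelSimplyConnected V) (hUV : U ⊆ V) :
    IsRelSimplyConnected U :=
  fun _ _ p q hp hq => hV p q (hp.trans hUV) (hq.trans hUV)

theorem IsRelSimplyConnected.of_simplyConnectedSpace (S : Set X) [SimplyConnectedSpace S] :
    IsRelSimplyConnected S := by
  intro a b p q hp hq
  let restrict (r : Path a b) (hr : range r ⊆ S) :
      Path (⟨a, hp ⟨0, p.source⟩⟩ : S) ⟨b, hp ⟨1, p.target⟩⟩ :=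
    ⟨⟨fun t => ⟨r t, hr ⟨t, rfl⟩⟩, by fun_prop⟩, by ext; simp, by ext; simp⟩
  exact (SimplyConnectedSpace.paths_homotopic (restrict p hp) (restrict q hq)).map
    ⟨_, continuous_subtype_val⟩

theorem IsRelSimplyConnected.trans_homotopic_trans {U : Set X} (hU : IsRelSimplyConnected U)
    {a b c d : X} {p : Path a b} {q : Path c d} {r₀ : Path a c} {r₁ : Path b d}
    (hp : range p ⊆ U) (hq : range q ⊆ U) (hr₀ : range r₀ ⊆ U) (hr₁ : range r₁ ⊆ U) :
    (p.trans r₁).Homotopic (r₀.trans q) :=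
  hU _ _ (by rw [Path.trans_range]; exact union_subset hp hr₁)
    (by rw [Path.trans_range]; exact union_subset hr₀ hq)

end RelSimplyConnected

namespace Path

variable {X : Type*} [TopologicalSpace X] {x y : X}

theorem subpath_trans_subpath_homotopic (γ : Path x y) (a b c : I) :
    ((γ.subpath a b).trans (γ.subpath b c)).Homotopic (γ.subpath a c) :=
  ⟨Homotopy.subpathTransSubpath γ a b c⟩

theorem Homotopic.subpath_trans_of_squares {γ γ' : Path x y} {t : ℕ → I}
    {r : ∀ n, Path (γ (t n)) (γ' (t n))}
    (hsq : ∀ n, ((γ.subpath (t n) (t (n + 1))).trans (r (n + 1))).Homotopic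
      ((r n).trans (γ'.subpath (t n) (t (n + 1))))) (n : ℕ) :
    ((γ.subpath (t 0) (t n)).trans (r n)).Homotopic ((r 0).trans (γ'.subpath (t 0) (t n))) := by
  induction n with
  | zero =>
    rw [subpath_self, subpath_self]
    exact ⟨(Homotopy.reflTrans _).trans (Homotopy.transRefl _).symm⟩
  | succ n ih =>
    simp only [← Homotopic.Quotient.eq, Homotopic.Quotient.mk_trans] at hsq ih ⊢
    rw [← Homotopic.Quotient.eq.2 (γ.subpath_trans_subpath_homotopic (t 0) (t n) (t (n + 1))),
      ← Homotopic.Quotient.eq.2 (γ'.subpath_trans_subpath_homotopic (t 0) (t n) (t (n + 1)))]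
    simp only [Homotopic.Quotient.mk_trans, Homotopic.Quotient.trans_assoc, hsq]
    rw [← Homotopic.Quotient.trans_assoc, ih, Homotopic.Quotient.trans_assoc]

theorem homotopic_refl_of_isRelSimplyConnected_range {r : Path x x}
    (hr : IsRelSimplyConnected (range r)) : r.Homotopic (refl x) :=
  hr _ _ subset_rfl (by rintro _ ⟨t, rfl⟩; exact ⟨0, r.source⟩)

theorem homotopic_of_trans_homotopic_trans {γ γ' : Path x y} {r₀ : Path x x} {r₁ : Path y y}
    (h : (γ.trans r₁).Homotopic (r₀.trans γ')) (h₀ : r₀.Homotopic (refl x))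
    (h₁ : r₁.Homotopic (refl y)) : γ.Homotopic γ' := by
  simp only [← Homotopic.Quotient.eq, Homotopic.Quotient.mk_trans] at h h₀ h₁ ⊢
  simpa [h₀, h₁, Homotopic.Quotient.mk_refl] using h

theorem homotopic_of_subpath_square {γ γ' : Path x y} {a b : I} {r₀ : Path (γ a) (γ' a)}
    {r₁ : Path (γ b) (γ' b)}
    (h : ((γ.subpath a b).trans r₁).Homotopic (r₀.trans (γ'.subpath a b)))
    (ha : a = 0) (hb : b = 1) (hr₀ : IsRelSimplyConnected (range r₀))
    (hr₁ : IsRelSimplyConnected (range r₁)) : γ.Homotopic γ' := by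
  subst ha hb
  rw [subpath_zero_one, subpath_zero_one] at h
  exact homotopic_of_trans_homotopic_trans (r₀ := r₀.cast γ.source.symm γ'.source.symm)
    (r₁ := r₁.cast γ.target.symm γ'.target.symm) (h.pathCast γ.source.symm γ'.target.symm)
    (homotopic_refl_of_isRelSimplyConnected_range hr₀)
    (homotopic_refl_of_isRelSimplyConnected_range hr₁)

end Path

/-- The pieces of `γ` over a subdivision on which it moves less than `δ / 4`, the corresponding
pieces of `γ'`, and the connecting paths at the subdivision points form squares, each lying in a
single `δ`-ball. -/
theorem Path.homotopic_of_forall_joinedIn_ball {X : Type*} [MetricSpace X] {x y : X} {δ : ℝ}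
    (hδ : ∀ p : X, IsRelSimplyConnected (ball p δ)) {γ γ' : Path x y}
    (hjoin : ∀ t, JoinedIn (ball (γ t) (δ / 4)) (γ t) (γ' t)) : γ.Homotopic γ' := by
  have hδ₀ : 0 < δ / 4 := pos_of_mem_ball (hjoin 0).source_mem
  obtain ⟨t, ht0, ht_mono, ⟨N, htN⟩, hγt⟩ := exists_monotone_Icc_subset_open_cover_unitInterval
    (c := fun s : I => γ ⁻¹' ball (γ s) (δ / 4)) (fun s => isOpen_ball.preimage γ.continuous)
    (fun s _ => mem_iUnion.2 ⟨s, mem_ball_self hδ₀⟩)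
  choose s hs using hγt
  have hball : ∀ n, ∀ u ∈ Icc (t n) (t (n + 1)), ball (γ u) (δ / 4) ⊆ ball (γ (s n)) δ :=
    fun n u hu => ball_subset_ball' (by linarith [mem_ball.1 (hs n hu)])
  let r n := (hjoin (t n)).somePath
  have hr : ∀ n, range (r n) ⊆ ball (γ (t n)) (δ / 4) := by
    rintro n _ ⟨u, rfl⟩
    exact (hjoin _).somePath_mem u
  have hr_left n : range (r n) ⊆ ball (γ (s n)) δ :=
    (hr n).trans (hball n _ (left_mem_Icc.2 (ht_mono n.le_succ)))
  have hr_right n : range (r (n + 1)) ⊆ ball (γ (s n)) δ :=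
    (hr (n + 1)).trans (hball n _ (right_mem_Icc.2 (ht_mono n.le_succ)))
  refine homotopic_of_subpath_square
    (Homotopic.subpath_trans_of_squares (r := r) (fun n => ?_) (N + 1))
    ht0 (htN _ N.le_succ) ((hδ _).mono (hr_left 0)) ((hδ _).mono (hr_right N))
  refine (hδ (γ (s n))).trans_homotopic_trans ?_ ?_ (hr_left n) (hr_right n) <;>
    rw [range_subpath_of_le _ _ _ (ht_mono n.le_succ)] <;> rintro _ ⟨u, hu, rfl⟩
  · exact hball n u hu (mem_ball_self hδ₀)
  · exact hball n u hu (hjoin u).target_mem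

instance (E : Type*) [NormedAddCommGroup E] [NormedSpace ℝ E] :
    StronglyLocallyContractibleSpace E :=
  .of_bases (fun _ => nhds_basis_ball) fun _ _ hr => contractibleSpace_ball hr

theorem ChartedSpace.stronglyLocallyContractibleSpace (H : Type*) [TopologicalSpace H]
    [StronglyLocallyContractibleSpace H] (M : Type*) [TopologicalSpace M] [ChartedSpace H M] :
    StronglyLocallyContractibleSpace M := by
  refine .of_bases (s := fun x s => (chartAt H x).symm '' s)
    (p := fun x s => s ∈ 𝓝 (chartAt H x x) ∧ ContractibleSpace s ∧ s ⊆ (chartAt H x).target)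
    (fun x => ?_) (fun x s hs => ?_)
  · have := (contractible_subset_basis (chartAt H x).open_target (mem_chart_target H x)).map
      (chartAt H x).symm
    rwa [(chartAt H x).symm_map_nhds_eq (mem_chart_source H x)] at this
  · obtain ⟨-, hs, hst⟩ := hs
    exact ((chartAt H x).symm.homeomorphOfImageSubsetSource hst rfl).symm.contractibleSpace

section Compact

variable {X : Type*} [MetricSpace X] [CompactSpace X]

theorem exists_pos_forall_isRelSimplyConnected_ball [StronglyLocallyContractibleSpace X] :
    ∃ δ > 0, ∀ p : X, IsRelSimplyConnected (ball p δ) := by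
  have hcover : univ ⊆ ⋃ S : {S : Set X // ContractibleSpace S}, interior (S : Set X) := by
    intro p _
    obtain ⟨S, hSp, hS⟩ := (contractible_basis p).ex_mem
    exact mem_iUnion.2 ⟨⟨S, hS⟩, mem_interior_iff_mem_nhds.2 hSp⟩
  obtain ⟨δ, hδ, hball⟩ :=
    lebesgue_number_lemma_of_metric isCompact_univ (fun _ => isOpen_interior) hcover
  refine ⟨δ, hδ, fun p => ?_⟩
  obtain ⟨⟨S, hS⟩, hpS⟩ := hball p (mem_univ p)
  exact (IsRelSimplyConnected.of_simplyConnectedSpace S).mono (hpS.trans interior_subset)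

theorem exists_pos_forall_joinedIn_ball [LocallyPathConnectedSpace X] {η : ℝ} (hη : 0 < η) :
    ∃ ε > 0, ∀ a b : X, dist a b < ε → JoinedIn (ball a η) a b := by
  have hcover : univ ⊆ ⋃ p : X, pathComponentIn (ball p (η / 2)) p := fun p _ =>
    mem_iUnion.2 ⟨p, mem_pathComponentIn_self (mem_ball_self (half_pos hη))⟩
  obtain ⟨ε, hε, hball⟩ := lebesgue_number_lemma_of_metric isCompact_univ
    (fun p => isOpen_ball.pathComponentIn p) hcover
  refine ⟨ε, hε, fun a b hab => ?_⟩
  obtain ⟨p, hp⟩ := hball a (mem_univ a)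
  have ha : JoinedIn (ball p (η / 2)) p a := hp (mem_ball_self hε)
  have hb : JoinedIn (ball p (η / 2)) p b := hp (mem_ball'.2 hab)
  refine (ha.symm.trans hb).mono (ball_subset_ball' ?_)
  linarith [mem_ball'.1 ha.target_mem]

variable [StronglyLocallyContractibleSpace X]

theorem exists_pos_forall_homotopic_of_dist_lt :
    ∃ ε > 0, ∀ ⦃x y : X⦄ (γ γ' : Path x y), (∀ t, dist (γ t) (γ' t) < ε) → γ.Homotopic γ' := by
  obtain ⟨δ, hδ, hδU⟩ := exists_pos_forall_isRelSimplyConnected_ball (X := X)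
  obtain ⟨ε, hε, hjoin⟩ := exists_pos_forall_joinedIn_ball (X := X) (η := δ / 4) (by positivity)
  exact ⟨ε, hε, fun x y γ γ' hclose =>
    Path.homotopic_of_forall_joinedIn_ball hδU fun t => hjoin _ _ (hclose t)⟩

theorem Path.setOf_homotopic_mem_nhds {x y : X} (γ : Path x y) :
    {γ' | γ'.Homotopic γ} ∈ 𝓝 γ := by
  obtain ⟨ε, hε, hhom⟩ := exists_pos_forall_homotopic_of_dist_lt (X := X)
  have hnear : (fun γ' : Path x y => (γ' : C(I, X))) ⁻¹' ball γ ε ∈ 𝓝 γ :=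
    (isOpen_ball.preimage continuous_induced_dom).mem_nhds (mem_ball_self hε)
  refine Filter.mem_of_superset hnear fun γ' hγ' => (hhom γ γ' fun t => ?_).symm
  rw [dist_comm]
  exact (ContinuousMap.dist_lt_iff hε).1 hγ' t

end Compact

theorem Setoid.countable_quotient_of_mem_nhds {α : Type*} [TopologicalSpace α]
    [TopologicalSpace.SeparableSpace α] (s : Setoid α) (h : ∀ a, {b | s b a} ∈ 𝓝 a) :
    Countable (Quotient s) := by
  obtain ⟨D, hD, hDd⟩ := TopologicalSpace.exists_countable_dense α
  have := hD.to_subtype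
  refine Function.Surjective.countable (f := fun d : D => Quotient.mk s d) ?_
  rintro ⟨a⟩
  obtain ⟨d, hdD, hd⟩ := hDd.inter_nhds_nonempty (h a)
  exact ⟨⟨d, hdD⟩, Quotient.sound hd⟩

theorem FundamentalGroup.countable_of_compactSpace {X : Type*} [TopologicalSpace X]
    [TopologicalSpace.MetrizableSpace X] [CompactSpace X] [StronglyLocallyContractibleSpace X]
    (x : X) : Countable (FundamentalGroup X x) := by
  let := TopologicalSpace.metrizableSpaceMetric X
  have : SecondCountableTopology (Path x x) :=
    Topology.IsInducing.secondCountableTopology (f := ((↑) : Path x x → C(I, X))) ⟨rfl⟩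
  exact Setoid.countable_quotient_of_mem_nhds (Path.Homotopic.setoid x x)
    Path.setOf_homotopic_mem_nhds

/-- The fundamental group of a compact Hausdorff topological manifold
is countable. -/
theorem fundamentalGroup_countable_of_compact_manifold {n : ℕ} (M : Type*)
    [TopologicalSpace M] [T2Space M] [ChartedSpace (EuclideanSpace ℝ (Fin n)) M]
    [CompactSpace M] (x : M) :
    Countable (FundamentalGroup M x) := by
  have := ChartedSpace.stronglyLocallyContractibleSpace (EuclideanSpace ℝ (Fin n)) M
  have := Manifold.metrizableSpace (modelWithCornersSelf ℝ (EuclideanSpace ℝ (Fin n))) M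
  exact FundamentalGroup.countable_of_compactSpace x
end

section
/- Let (G_i)_{i∈ι} be a family of groups, each of which is torsion-free. Then the free product (coproduct) of the family (G_i)_{i∈ι} is a torsion-free group. -/
/-- The pre-2025 Mathlib notion: a monoid is torsion-free if no non-identity element
has finite order. -/
def Monoid.IsTorsionFree (G : Type*) [Monoid G] : Prop :=
  ∀ g : G, g ≠ 1 → ¬IsOfFinOrder g

/-!
Every nontrivial element of a free product is a nonempty reduced word. If the first and last
letters of such a word lie in the same factor, conjugating by the first letter moves it to the
end, where it either cancels against the last letter, leaving a shorter word, or merges with it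
into a word whose first and last letters lie in different factors. So by induction on the
length, every nontrivial element is conjugate to a nontrivial element of a factor or to such a
cyclically reduced word. Powers of a cyclically reduced word are obtained by concatenation, so
they are again nonempty reduced words and hence nontrivial.
-/

namespace Monoid.CoprodI.NeWord

variable {ι : Type*}

section Monoid

variable {M : ι → Type*} [∀ i, Monoid (M i)]

theorem head_ne_one {i j} (w : NeWord M i j) : w.head ≠ 1 := by
  induction w with
  | singleton x hx => exact hx
  | append w₁ _ _ ih₁ _ => exact ih₁

theorem prod_ne_one {i j} (w : NeWord M i j) : w.prod ≠ 1 := by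
  classical
  intro hw
  have : w.toWord = Word.empty :=
    Word.equiv.symm.injective (hw.trans Word.prod_empty.symm)
  exact w.toList_ne_nil (congrArg Word.toList this)

theorem exists_prod_eq {g : CoprodI M} (hg : g ≠ 1) :
    ∃ i j, ∃ w : NeWord M i j, w.prod = g := by
  classical
  have hne : Word.equiv g ≠ Word.empty := by
    intro he
    exact hg (by rw [← Word.equiv.symm_apply_apply g, he]; exact Word.prod_empty)
  obtain ⟨i, j, w, hw⟩ := of_word (Word.equiv g) hne
  exact ⟨i, j, w, by rw [NeWord.prod, hw]; exact Word.equiv.symm_apply_apply g⟩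

theorem length_eq_one_or_exists_prod_eq_of_head_mul {i j} (w : NeWord M i j) :
    (i = j ∧ w.toList.length = 1 ∧ w.prod = of w.head) ∨
    ∃ k, ∃ _ : i ≠ k, ∃ v : NeWord M k j,
      v.toList.length + 1 = w.toList.length ∧ w.prod = of w.head * v.prod := by
  induction w with
  | singleton x hx => exact .inl ⟨rfl, rfl, prod_singleton x hx⟩
  | @append _ _ k _ w₁ hne w₂ ih₁ _ =>
    right
    rcases ih₁ with ⟨rfl, hlen, hw₁⟩ | ⟨k', hik', v, hlen, hw₁⟩
    · refine ⟨k, hne, w₂, ?_, by simp [hw₁]⟩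
      simp [hlen, Nat.add_comm]
    · refine ⟨k', hik', append v hne w₂, ?_, by simp [hw₁, mul_assoc]⟩
      simp only [toList, List.length_append] at *
      omega

theorem length_eq_one_or_exists_prod_eq_mul_of_last {i j} (w : NeWord M i j) :
    (i = j ∧ w.toList.length = 1 ∧ w.prod = of w.last) ∨
    ∃ k, ∃ _ : k ≠ j, ∃ v : NeWord M i k,
      v.toList.length + 1 = w.toList.length ∧ w.prod = v.prod * of w.last := by
  induction w with
  | singleton x hx => exact .inl ⟨rfl, rfl, prod_singleton x hx⟩
  | @append _ j _ _ w₁ hne w₂ _ ih₂ =>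
    right
    rcases ih₂ with ⟨rfl, hlen, hw₂⟩ | ⟨k', hk'l, v, hlen, hw₂⟩
    · refine ⟨j, hne, w₁, ?_, by simp [hw₂]⟩
      simp [hlen]
    · refine ⟨k', hk'l, append w₁ hne v, ?_, by simp [hw₂, mul_assoc]⟩
      simp only [toList, List.length_append] at *
      omega

theorem exists_prod_eq_pow {i j} (hij : i ≠ j) (w : NeWord M i j) {n : ℕ} (hn : 0 < n) :
    ∃ v : NeWord M i j, v.prod = w.prod ^ n := by
  induction n, hn using Nat.le_induction with
  | base => exact ⟨w, (pow_one _).symm⟩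
  | succ n _ ih =>
    obtain ⟨v, hv⟩ := ih
    exact ⟨append w hij.symm v, by rw [append_prod, hv, ← pow_succ']⟩

theorem not_isOfFinOrder_prod {i j} (hij : i ≠ j) (w : NeWord M i j) : ¬IsOfFinOrder w.prod := by
  rw [isOfFinOrder_iff_pow_eq_one]
  rintro ⟨n, hn, hpow⟩
  obtain ⟨v, hv⟩ := exists_prod_eq_pow hij w hn
  exact v.prod_ne_one (hv.trans hpow)

end Monoid

variable {G : ι → Type*} [∀ i, Group (G i)]

theorem exists_isConj_of_or_exists_isConj_prod_of_ne {i j} (w : NeWord G i j) :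
    (∃ k, ∃ x : G k, x ≠ 1 ∧ IsConj w.prod (of x)) ∨
    ∃ k l, ∃ _ : k ≠ l, ∃ v : NeWord G k l, IsConj w.prod v.prod := by
  induction hN : w.toList.length using Nat.strong_induction_on generalizing i j with
  | _ N IH =>
    by_cases hij : i ≠ j
    · exact .inr ⟨i, j, hij, w, .refl _⟩
    obtain rfl := not_ne_iff.1 hij
    rcases length_eq_one_or_exists_prod_eq_of_head_mul w with
      ⟨-, -, hw⟩ | ⟨k, hik, w', hlen', hw⟩
    · exact .inl ⟨i, w.head, w.head_ne_one, hw ▸ .refl _⟩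
    rcases length_eq_one_or_exists_prod_eq_mul_of_last w' with
      ⟨rfl, -, -⟩ | ⟨l, hli, v, hlen, hw'⟩
    · exact absurd rfl hik
    set x := w.head
    set y := w'.last
    have hconj : IsConj w.prod (v.prod * of (y * x)) :=
      isConj_iff.2 ⟨(of x)⁻¹, by rw [hw, hw', map_mul]; group⟩
    by_cases hyx : y * x = 1
    · rw [hyx, map_one, mul_one] at hconj
      rcases IH _ (by omega) v rfl with ⟨k', x', hx', hv⟩ | ⟨k', l', hkl, v', hv⟩
      · exact .inl ⟨k', x', hx', hconj.trans hv⟩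
      · exact .inr ⟨k', l', hkl, v', hconj.trans hv⟩
    · exact .inr ⟨k, i, hik.symm, append v hli (singleton (y * x) hyx), by simpa using hconj⟩

end Monoid.CoprodI.NeWord

open Monoid.CoprodI in
/-- The free product (coproduct) of a family of torsion-free groups
is torsion-free. -/
theorem free_product_torsion_free {ι : Type*} (G : ι → Type*) [∀ i, Group (G i)]
    (h : ∀ i, Monoid.IsTorsionFree (G i)) :
    Monoid.IsTorsionFree (Monoid.CoprodI G) := by
  intro g hg hfin
  obtain ⟨i, j, w, rfl⟩ := NeWord.exists_prod_eq hg
  rcases w.exists_isConj_of_or_exists_isConj_prod_of_ne with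
    ⟨k, x, hx, hconj⟩ | ⟨k, l, hkl, v, hconj⟩
  · exact h k x hx <| (of_injective k).isOfFinOrder_iff.1 (hconj.isOfFinOrder hfin)
  · exact NeWord.not_isOfFinOrder_prod hkl v (hconj.isOfFinOrder hfin)
end
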